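/- arXiv:1404.4864 — 4 statements merged into one kernel-verified Lean document; each statement's English description precedes it below -/
import Mathlib

section
/- Let M ∈ ℝ^{p×q} be a nonnegative matrix that contains a k×k triangular submatrix T, i.e., there exist injective maps r : {1,…,k} → {1,…,p} and c : {1,…,k} → {1,…,q} such that M_{r(i), c(i)} ≠ 0 for all i and M_{r(i), c(j)} = 0 whenever i > j. Then every psd factorization of M has size at least k; in particular, the psd rank of M is at least k. -/
/-- A psd factorization of size `k` of a nonnegative matrix `M ∈ ℝ^{p×q}`:
real symmetric positive semidefinite `k×k` matrices `A₁,…,A_p` and `B₁,…,B_q`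
with `M i j = trace (A i * B j)` for all `i, j`. -/
def IsPsdFactorization {p q k : ℕ} (M : Matrix (Fin p) (Fin q) ℝ)
    (A : Fin p → Matrix (Fin k) (Fin k) ℝ) (B : Fin q → Matrix (Fin k) (Fin k) ℝ) : Prop :=
  (∀ i, (A i).PosSemidef) ∧ (∀ j, (B j).PosSemidef) ∧
    ∀ i j, M i j = Matrix.trace (A i * B j)

/-- The psd rank of a nonnegative matrix: the smallest positive integer `k` for which
a psd factorization of size `k` exists. -/
noncomputable def psdRank {p q : ℕ} (M : Matrix (Fin p) (Fin q) ℝ) : ℕ :=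
  sInf {k : ℕ | 0 < k ∧ ∃ (A : Fin p → Matrix (Fin k) (Fin k) ℝ)
    (B : Fin q → Matrix (Fin k) (Fin k) ℝ), IsPsdFactorization M A B}

/-!
For psd `A` and `B`, `trace (A * B) = 0` forces `A * B = 0`. Hence the zeros below the diagonal
of the triangular submatrix pass to the products `A (r i) * B (c j)`. Choosing a nonzero entry
`(a i, l i)` of each diagonal product, the rows `a i` of the `A (r i)` and the columns `l j` of the
`B (c j)` form a `k × m` and an `m × k` matrix whose product is upper triangular with nonzero
diagonal, hence invertible, so `k ≤ m`.
-/

open Matrix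

open scoped ComplexOrder MatrixOrder in
theorem Matrix.PosSemidef.trace_mul_eq_zero_iff {𝕜 n : Type*} [RCLike 𝕜] [Fintype n]
    {A B : Matrix n n 𝕜} (hA : A.PosSemidef) (hB : B.PosSemidef) :
    (A * B).trace = 0 ↔ A * B = 0 := by
  classical
  obtain ⟨X, rfl⟩ := CStarAlgebra.nonneg_iff_eq_star_mul_self.mp hA.nonneg
  obtain ⟨Y, rfl⟩ := CStarAlgebra.nonneg_iff_eq_star_mul_self.mp hB.nonneg
  have htrace : (star X * X * (star Y * Y)).trace = (X * Yᴴ * (X * Yᴴ)ᴴ).trace := by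
    rw [conjTranspose_mul, conjTranspose_conjTranspose, star_eq_conjTranspose,
      star_eq_conjTranspose, Matrix.mul_assoc, trace_mul_comm]
    simp only [Matrix.mul_assoc]
  rw [htrace, trace_mul_conjTranspose_self_eq_zero_iff, star_eq_conjTranspose,
    star_eq_conjTranspose, conjTranspose_mul_self_mul_eq_zero, mul_conjTranspose_mul_self_eq_zero]

theorem Matrix.card_le_of_mul_isUpperTriangular {K ι n : Type*} [Field K] [Fintype ι]
    [LinearOrder ι] [Fintype n] {X : Matrix ι n K} {Y : Matrix n ι K}
    (htri : (X * Y).IsUpperTriangular) (hdiag : ∀ i, (X * Y) i i ≠ 0) :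
    Fintype.card ι ≤ Fintype.card n := by
  classical
  have hunit : IsUnit (X * Y) := by
    rw [isUnit_iff_isUnit_det, det_of_isUpperTriangular htri]
    exact (Finset.prod_ne_zero_iff.mpr fun i _ ↦ hdiag i).isUnit
  calc Fintype.card ι = (X * Y).rank := (rank_of_isUnit _ hunit).symm
    _ ≤ X.rank := rank_mul_le_left X Y
    _ ≤ Fintype.card n := rank_le_card_width X

theorem IsPsdFactorization.card_le_of_isUpperTriangular {p q m : ℕ} {ι : Type*} [Fintype ι]
    [LinearOrder ι] {M : Matrix (Fin p) (Fin q) ℝ} {A : Fin p → Matrix (Fin m) (Fin m) ℝ}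
    {B : Fin q → Matrix (Fin m) (Fin m) ℝ} (hAB : IsPsdFactorization M A B)
    {r : ι → Fin p} {c : ι → Fin q} (hdiag : ∀ i, M (r i) (c i) ≠ 0)
    (htri : (M.submatrix r c).IsUpperTriangular) : Fintype.card ι ≤ m := by
  obtain ⟨hA, hB, htrace⟩ := hAB
  have hzero : ∀ i j, M (r i) (c j) = 0 ↔ A (r i) * B (c j) = 0 := fun i j ↦ by
    rw [htrace, (hA _).trace_mul_eq_zero_iff (hB _)]
  have hentry : ∀ i, ∃ a l, (A (r i) * B (c i)) a l ≠ 0 := fun i ↦ by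
    by_contra! h
    exact hdiag i ((hzero i i).mpr (Matrix.ext h))
  choose a l hal using hentry
  let X : Matrix ι (Fin m) ℝ := of fun i b ↦ A (r i) (a i) b
  let Y : Matrix (Fin m) ι ℝ := of fun b j ↦ B (c j) b (l j)
  have hXY : ∀ i j, (X * Y) i j = (A (r i) * B (c j)) (a i) (l j) := fun _ _ ↦ rfl
  simpa using card_le_of_mul_isUpperTriangular (X := X) (Y := Y)
    (fun i j hji ↦ by rw [hXY, (hzero i j).mp (htri hji)]; rfl) (fun i ↦ hXY i i ▸ hal i)

theorem exists_isPsdFactorization_of_nonneg {p q : ℕ} {M : Matrix (Fin p) (Fin q) ℝ}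
    (hM : ∀ i j, 0 ≤ M i j) :
    ∃ (A : Fin p → Matrix (Fin (p + 1)) (Fin (p + 1)) ℝ)
      (B : Fin q → Matrix (Fin (p + 1)) (Fin (p + 1)) ℝ), IsPsdFactorization M A B := by
  refine ⟨fun i ↦ diagonal (Pi.single i.castSucc 1),
    fun j ↦ diagonal (Fin.lastCases 0 fun l ↦ M l j), fun i ↦ ?_, fun j ↦ ?_, fun i j ↦ ?_⟩
  · exact posSemidef_diagonal_iff.mpr fun l ↦ by
      by_cases h : l = i.castSucc <;> simp [h]
  · exact posSemidef_diagonal_iff.mpr fun l ↦ by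
      induction l using Fin.lastCases <;> simp [hM]
  · rw [diagonal_mul_diagonal, trace_diagonal, Finset.sum_eq_single i.castSucc] <;> simp_all

theorem exists_isPsdFactorization_psdRank {p q : ℕ} {M : Matrix (Fin p) (Fin q) ℝ}
    (hM : ∀ i j, 0 ≤ M i j) :
    ∃ (A : Fin p → Matrix (Fin (psdRank M)) (Fin (psdRank M)) ℝ)
      (B : Fin q → Matrix (Fin (psdRank M)) (Fin (psdRank M)) ℝ), IsPsdFactorization M A B := by
  obtain ⟨A, B, hAB⟩ := exists_isPsdFactorization_of_nonneg hM
  have hne : {k : ℕ | 0 < k ∧ ∃ (A : Fin p → Matrix (Fin k) (Fin k) ℝ)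
      (B : Fin q → Matrix (Fin k) (Fin k) ℝ), IsPsdFactorization M A B}.Nonempty :=
    ⟨p + 1, p.succ_pos, A, B, hAB⟩
  exact (Nat.sInf_mem hne).2

theorem psdRank_ge_of_triangular_submatrix_general {p q k : ℕ} (M : Matrix (Fin p) (Fin q) ℝ)
    (hM : ∀ i j, 0 ≤ M i j)
    (r : Fin k → Fin p) (c : Fin k → Fin q)
    (hdiag : ∀ i, M (r i) (c i) ≠ 0)
    (htri : ∀ i j : Fin k, j < i → M (r i) (c j) = 0) :
    (∀ (m : ℕ) (A : Fin p → Matrix (Fin m) (Fin m) ℝ)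
        (B : Fin q → Matrix (Fin m) (Fin m) ℝ),
      IsPsdFactorization M A B → k ≤ m) ∧ k ≤ psdRank M := by
  have hsize : ∀ (m : ℕ) (A : Fin p → Matrix (Fin m) (Fin m) ℝ)
      (B : Fin q → Matrix (Fin m) (Fin m) ℝ), IsPsdFactorization M A B → k ≤ m :=
    fun m A B hAB ↦ by
      simpa using hAB.card_le_of_isUpperTriangular hdiag fun i j hji ↦ htri i j hji
  obtain ⟨A, B, hAB⟩ := exists_isPsdFactorization_psdRank hM
  exact ⟨hsize, hsize _ A B hAB⟩

/-- If a nonnegative matrix `M` contains a `k × k` triangular submatrix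
(indexed by injections `r`, `c`, with nonzero diagonal and zeros below the diagonal),
then every psd factorization of `M` has size at least `k`; in particular
`psdRank M ≥ k`. -/
theorem psdRank_ge_of_triangular_submatrix {p q k : ℕ} (M : Matrix (Fin p) (Fin q) ℝ)
    (hM : ∀ i j, 0 ≤ M i j)
    (r : Fin k → Fin p) (c : Fin k → Fin q)
    (hr : Function.Injective r) (hc : Function.Injective c)
    (hdiag : ∀ i, M (r i) (c i) ≠ 0)
    (htri : ∀ i j : Fin k, j < i → M (r i) (c j) = 0) :
    (∀ (m : ℕ) (A : Fin p → Matrix (Fin m) (Fin m) ℝ)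
        (B : Fin q → Matrix (Fin m) (Fin m) ℝ),
      IsPsdFactorization M A B → k ≤ m) ∧ k ≤ psdRank M :=
  psdRank_ge_of_triangular_submatrix_general M hM r c hdiag htri
end

section
/- Let M ∈ ℝ^{p×q} be a nonnegative matrix containing a k×k triangular submatrix: there exist injective maps r : {1,…,k} → {1,…,p} and c : {1,…,k} → {1,…,q} such that M_{r(i), c(i)} ≠ 0 for all i and M_{r(i), c(j)} = 0 whenever i > j. Suppose (A₁,…,A_p, B₁,…,B_q) is a psd factorization of M of size exactly k. Then the factor A_{r(k)} corresponding to the row of the triangular submatrix containing k−1 zeros has matrix rank exactly one. -/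
/-!
For psd `A`, `B` the trace `trace (A * B) = ‖√A √B‖²` vanishes only if `A * B = 0`. So the zeros
below the diagonal of the triangular submatrix give `A (r i) * B (c j) = 0` for `j < i`, while its
nonzero diagonal gives `A (r i) * B (c i) ≠ 0`. Picking `x j` in the range of `B (c j)` with
`A (r j) x j ≠ 0`, the vectors `x j` form a triangular, hence linearly independent, family, and
`x 0, …, x (k - 2)` lie in the kernel of `A (r (k - 1))`. That kernel thus has dimension at least
`k - 1` in `ℝᵏ`, and the factor, being nonzero, has rank exactly one.
-/

open Matrix Module
open scoped MatrixOrder ComplexOrder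

theorem Matrix.PosSemidef.mul_eq_zero_of_trace_mul_eq_zero {𝕜 n : Type*} [RCLike 𝕜] [Fintype n]
    {A B : Matrix n n 𝕜} (hA : A.PosSemidef) (hB : B.PosSemidef)
    (h : (A * B).trace = 0) : A * B = 0 := by
  classical
  set S := CFC.sqrt A
  set T := CFC.sqrt B
  have hS : Sᴴ = S := (CFC.sqrt_nonneg A).isSelfAdjoint
  have hT : Tᴴ = T := (CFC.sqrt_nonneg B).isSelfAdjoint
  have hSS : S * S = A := CFC.sqrt_mul_sqrt_self A hA.nonneg
  have hTT : T * T = B := CFC.sqrt_mul_sqrt_self B hB.nonneg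
  have hST : S * T = 0 := by
    rw [← trace_conjTranspose_mul_self_eq_zero_iff, conjTranspose_mul, hS, hT, ← h, ← hSS, ← hTT]
    simpa only [mul_assoc] using trace_mul_comm T (S * S * T)
  rw [← hSS, ← hTT, mul_assoc, ← mul_assoc S S, ← mul_assoc, mul_assoc S, hST, mul_zero, zero_mul]

section Triangular

variable {K V W : Type*} [Field K] [AddCommGroup V] [Module K V] [AddCommGroup W] [Module K W]

theorem linearIndependent_of_triangular {ι : Type*} [LinearOrder ι] (f : ι → V →ₗ[K] W)
    (x : ι → V) (hlt : ∀ i j, j < i → f i (x j) = 0) (hdiag : ∀ i, f i (x i) ≠ 0) :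
    LinearIndependent K x := by
  classical
  rw [linearIndependent_iff']
  intro s g hsum i hi
  by_contra hgi
  -- apply `f m` for the largest `m` with `g m ≠ 0`: only the term `g m • f m (x m)` survives
  set t := s.filter (g · ≠ 0)
  have ht : t.Nonempty := ⟨i, Finset.mem_filter.2 ⟨hi, hgi⟩⟩
  obtain ⟨hms, hgm⟩ := Finset.mem_filter.1 (t.max'_mem ht)
  set m := t.max' ht
  have hfm : ∑ j ∈ s, g j • f m (x j) = 0 := by simpa using congrArg (f m) hsum
  rw [Finset.sum_eq_single m] at hfm
  · exact hdiag m ((smul_eq_zero.1 hfm).resolve_left hgm)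
  · intro j hj hjm
    rcases lt_or_gt_of_ne hjm with hjm | hmj
    · rw [hlt m j hjm, smul_zero]
    · have hgj : g j = 0 := by
        by_contra hgj
        exact (t.le_max' j (Finset.mem_filter.2 ⟨hj, hgj⟩)).not_gt hmj
      rw [hgj, zero_smul]
  · exact fun h => absurd hms h

theorem le_finrank_ker_of_triangular [FiniteDimensional K V] {n : ℕ} (f : Fin n → V →ₗ[K] W)
    (x : Fin n → V) (hlt : ∀ i j, j < i → f i (x j) = 0) (hdiag : ∀ i, f i (x i) ≠ 0)
    (i : Fin n) : (i : ℕ) ≤ finrank K (LinearMap.ker (f i)) := by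
  have hli : LinearIndependent K (x ∘ Fin.castLE i.isLt.le) :=
    (linearIndependent_of_triangular f x hlt hdiag).comp _ (Fin.castLE_injective _)
  calc (i : ℕ) = finrank K (Submodule.span K (Set.range (x ∘ Fin.castLE i.isLt.le))) := by
        rw [finrank_span_eq_card hli, Fintype.card_fin]
    _ ≤ finrank K (LinearMap.ker (f i)) := by
        refine Submodule.finrank_mono (Submodule.span_le.2 ?_)
        rintro _ ⟨j, rfl⟩
        exact hlt i _ j.isLt

end Triangular

namespace Matrix

variable {K l m o : Type*} [Field K] [Fintype m]

theorem exists_mulVec_ne_zero {A : Matrix l m K} (hA : A ≠ 0) : ∃ v, A *ᵥ v ≠ 0 := by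
  by_contra! h
  exact hA (ext_iff_mulVec.2 fun v => by rw [h, zero_mulVec])

theorem rank_pos_of_ne_zero {A : Matrix l m K} (hA : A ≠ 0) : 0 < A.rank := by
  rw [pos_iff_ne_zero, rank, Ne, Submodule.finrank_eq_zero, LinearMap.range_eq_bot]
  exact fun h => hA (ext_iff_mulVec.2 fun v => by simpa using LinearMap.congr_fun h v)

theorem rank_add_le_card_of_triangular [Fintype o] {n : ℕ} (A : Fin n → Matrix l m K)
    (B : Fin n → Matrix m o K) (hlt : ∀ i j, j < i → A i * B j = 0)
    (hdiag : ∀ i, A i * B i ≠ 0) (i : Fin n) : (i : ℕ) + (A i).rank ≤ Fintype.card m := by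
  choose y hy using fun j => exists_mulVec_ne_zero (hdiag j)
  have hker := le_finrank_ker_of_triangular (fun j => (A j).mulVecLin) (fun j => B j *ᵥ y j)
    (fun i j hij => by simp [mulVec_mulVec, hlt i j hij])
    (fun j => by simpa [mulVec_mulVec] using hy j) i
  have hrank := LinearMap.finrank_range_add_finrank_ker (A i).mulVecLin
  rw [finrank_fintype_fun_eq_card] at hrank
  rw [rank]
  omega

end Matrix

theorem last_row_factor_rank_one_of_triangular_submatrix_general {p q k : ℕ} (hk : 0 < k)
    (M : Matrix (Fin p) (Fin q) ℝ)
    (r : Fin k → Fin p) (c : Fin k → Fin q)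
    (hdiag : ∀ i, M (r i) (c i) ≠ 0)
    (htri : ∀ i j : Fin k, j < i → M (r i) (c j) = 0)
    (A : Fin p → Matrix (Fin k) (Fin k) ℝ) (B : Fin q → Matrix (Fin k) (Fin k) ℝ)
    (hfac : IsPsdFactorization M A B) :
    (A (r ⟨k - 1, Nat.sub_lt hk Nat.one_pos⟩)).rank = 1 := by
  obtain ⟨hA, hB, hMAB⟩ := hfac
  set last : Fin k := ⟨k - 1, Nat.sub_lt hk Nat.one_pos⟩
  have hzero : ∀ i j, j < i → A (r i) * B (c j) = 0 := fun i j hij =>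
    (hA _).mul_eq_zero_of_trace_mul_eq_zero (hB _) (hMAB .. ▸ htri i j hij)
  have hne : ∀ i, A (r i) * B (c i) ≠ 0 := fun i h => hdiag i (by rw [hMAB, h, trace_zero])
  have hle : k - 1 + (A (r last)).rank ≤ k := by
    simpa using rank_add_le_card_of_triangular _ _ hzero hne last
  have hpos : 0 < (A (r last)).rank := rank_pos_of_ne_zero (left_ne_zero_of_mul (hne last))
  omega

/-- If a nonnegative matrix `M` contains a `k × k` triangular submatrix
(indexed by injections `r`, `c`, with nonzero diagonal and zeros below the diagonal)
and `(A, B)` is a psd factorization of `M` of size exactly `k`, then the factor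
`A (r (k-1))` corresponding to the last row of the triangular submatrix (the row
with `k - 1` zeros) has rank exactly one. -/
theorem last_row_factor_rank_one_of_triangular_submatrix {p q k : ℕ} (hk : 0 < k)
    (M : Matrix (Fin p) (Fin q) ℝ) (hM : ∀ i j, 0 ≤ M i j)
    (r : Fin k → Fin p) (c : Fin k → Fin q)
    (hr : Function.Injective r) (hc : Function.Injective c)
    (hdiag : ∀ i, M (r i) (c i) ≠ 0)
    (htri : ∀ i j : Fin k, j < i → M (r i) (c j) = 0)
    (A : Fin p → Matrix (Fin k) (Fin k) ℝ) (B : Fin q → Matrix (Fin k) (Fin k) ℝ)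
    (hfac : IsPsdFactorization M A B) :
    (A (r ⟨k - 1, Nat.sub_lt hk Nat.one_pos⟩)).rank = 1 :=
  last_row_factor_rank_one_of_triangular_submatrix_general hk M r c hdiag htri A B hfac
end

section
/- Let M be the 8×6 real matrix with rows (0,0,2,1,0,1), (1,0,0,2,0,1), (0,1,2,0,0,1), (1,2,0,0,0,1), (0,0,2,1,1,0), (1,0,0,2,1,0), (0,1,2,0,1,0), (1,2,0,0,1,0). The entrywise nonnegative square root of M, i.e., the matrix whose (i,j) entry is √(M_{ij}), has (usual) rank exactly four. -/
/-!
The rows `r₀, …, r₇` of `√M` satisfy `r₃ = -√2 r₀ + r₁ + √2 r₂` and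
`r_{i+4} = r_i + e₄ - e₅` (indices from `0`), so `√M` factors through `ℝ⁴` and has rank at most four.
Rows `0, 1, 2, 4` and columns `5, 0, 1, 4` form a unitriangular minor, so the rank is at least four.
-/

open Matrix

theorem Matrix.card_le_rank_of_det_submatrix_ne_zero {R m n k : Type*} [CommRing R] [IsDomain R]
    [Fintype n] [Fintype k] [DecidableEq k] (A : Matrix m n R) (r : k → m) (c : k → n)
    (h : (A.submatrix r c).det ≠ 0) : Fintype.card k ≤ A.rank :=
  (rank_of_det_mem_nonZeroDivisors (mem_nonZeroDivisors_of_ne_zero h)).symm.trans_le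
    (A.rank_submatrix_le r c)

noncomputable section

def sqrtMRowCoords : Matrix (Fin 8) (Fin 4) ℝ :=
  !![1, 0, 0, 0;
     0, 1, 0, 0;
     0, 0, 1, 0;
     -√2, 1, √2, 0;
     1, 0, 0, 1;
     0, 1, 0, 1;
     0, 0, 1, 1;
     -√2, 1, √2, 1]

def sqrtMRowBasis : Matrix (Fin 4) (Fin 6) ℝ :=
  !![0, 0, √2, 1, 0, 1;
     1, 0, 0, √2, 0, 1;
     0, 1, √2, 0, 0, 1;
     0, 0, 0, 0, 1, -1]

end

/-- The entrywise nonnegative square root of the explicit `8 × 6` matrix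
`M` has (usual) rank exactly four. -/
theorem rank_entrywise_sqrt_M_eq_four :
    let M : Matrix (Fin 8) (Fin 6) ℝ :=
      !![0, 0, 2, 1, 0, 1;
         1, 0, 0, 2, 0, 1;
         0, 1, 2, 0, 0, 1;
         1, 2, 0, 0, 0, 1;
         0, 0, 2, 1, 1, 0;
         1, 0, 0, 2, 1, 0;
         0, 1, 2, 0, 1, 0;
         1, 2, 0, 0, 1, 0]
    (M.map Real.sqrt).rank = 4 := by
  intro M
  apply le_antisymm
  · have hfactor : M.map Real.sqrt = sqrtMRowCoords * sqrtMRowBasis := by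
      ext i j
      fin_cases i <;> fin_cases j <;>
        simp [M, sqrtMRowCoords, sqrtMRowBasis, mul_apply, Fin.sum_univ_succ]
    rw [hfactor]
    exact (rank_mul_le_left _ _).trans (rank_le_width _)
  · have hminor : (M.map Real.sqrt).submatrix ![0, 1, 2, 4] ![5, 0, 1, 4] =
        !![1, 0, 0, 0; 1, 1, 0, 0; 1, 0, 1, 0; 0, 0, 0, 1] := by
      ext i j
      fin_cases i <;> fin_cases j <;> simp [M]
    have hdet : ((M.map Real.sqrt).submatrix ![0, 1, 2, 4] ![5, 0, 1, 4]).det ≠ 0 := by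
      rw [hminor]
      simp [det_succ_row_zero, Fin.sum_univ_succ]
    simpa using (M.map Real.sqrt).card_le_rank_of_det_submatrix_ne_zero _ _ hdet
end

section
/- Let M be the 8×6 real matrix with rows (0,0,2,1,0,1), (1,0,0,2,0,1), (0,1,2,0,0,1), (1,2,0,0,0,1), (0,0,2,1,1,0), (1,0,0,2,1,0), (0,1,2,0,1,0), (1,2,0,0,1,0). Then M admits a psd factorization of size four, and M admits no psd factorization of size three; that is, the psd rank of M equals four. -/
open Module Submodule
open scoped InnerProductSpace MatrixOrder ComplexOrder

namespace Matrix

variable {𝕜 n : Type*} [RCLike 𝕜] [Fintype n]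

theorem PosSemidef.trace_mul_eq_zero_iff_s6 {A B : Matrix n n 𝕜} (hA : A.PosSemidef)
    (hB : B.PosSemidef) : (A * B).trace = 0 ↔ A * B = 0 := by
  classical
  refine ⟨fun h => ?_, fun h => by rw [h, trace_zero]⟩
  obtain ⟨L, rfl⟩ := CStarAlgebra.nonneg_iff_eq_star_mul_self.mp hA.nonneg
  obtain ⟨K, rfl⟩ := CStarAlgebra.nonneg_iff_eq_star_mul_self.mp hB.nonneg
  -- `trace (L* L K* K)` is the squared Frobenius norm of `K L*`.
  have hKL : K * star L = 0 := by
    rw [← trace_conjTranspose_mul_self_eq_zero_iff, ← h, conjTranspose_mul]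
    simp only [star_eq_conjTranspose, conjTranspose_conjTranspose]
    rw [← Matrix.mul_assoc, trace_mul_comm]
    simp only [Matrix.mul_assoc]
  calc star L * L * (star K * K) = star L * star (K * star L) * K := by
        simp only [star_mul, star_star, Matrix.mul_assoc]
    _ = 0 := by rw [hKL, star_zero, Matrix.mul_zero, Matrix.zero_mul]

theorem PosSemidef.trace_mul_eq_zero_iff_isOrtho [DecidableEq n] {A B : Matrix n n 𝕜}
    (hA : A.PosSemidef) (hB : B.PosSemidef) :
    (A * B).trace = 0 ↔
      LinearMap.range (toEuclideanLin A) ⟂ LinearMap.range (toEuclideanLin B) := by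
  rw [hA.trace_mul_eq_zero_iff_s6 hB, isOrtho_comm, isOrtho_iff_le,
    (isSymmetric_toEuclideanLin_iff.mpr hA.1).orthogonal_range, LinearMap.range_le_ker_iff,
    ← toLpLin_mul_same, LinearEquiv.map_eq_zero_iff]

end Matrix

section FinrankLeThree

variable {𝕜 E : Type*} [RCLike 𝕜] [NormedAddCommGroup E] [InnerProductSpace 𝕜 E]
  [FiniteDimensional 𝕜 E]

theorem exists_smul_eq_of_inner_eq_zero_of_finrank_le_three (hE : finrank 𝕜 E ≤ 3)
    {v w a b : E} (hvw : LinearIndependent 𝕜 ![v, w]) (hav : ⟪a, v⟫_𝕜 = 0)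
    (haw : ⟪a, w⟫_𝕜 = 0) (hbv : ⟪b, v⟫_𝕜 = 0) (hbw : ⟪b, w⟫_𝕜 = 0) (hb : b ≠ 0) :
    ∃ c : 𝕜, c • b = a := by
  set K := span 𝕜 {v, w} with K_def
  have mem_orthogonal : ∀ x : E, ⟪x, v⟫_𝕜 = 0 → ⟪x, w⟫_𝕜 = 0 → x ∈ Kᗮ := fun x hxv hxw => by
    rw [K_def, span_insert, ← inf_orthogonal, mem_inf, mem_orthogonal_singleton_iff_inner_left,
      mem_orthogonal_singleton_iff_inner_left]
    exact ⟨hxv, hxw⟩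
  have hK : finrank 𝕜 K = 2 := by
    rw [K_def, ← Matrix.range_cons_cons_empty v w ![], finrank_span_eq_card hvw, Fintype.card_fin]
  have hKperp : finrank 𝕜 Kᗮ = 1 := by
    have := K.finrank_add_finrank_orthogonal
    have : 0 < finrank 𝕜 Kᗮ :=
      finrank_pos_iff_exists_ne_zero.mpr ⟨⟨b, mem_orthogonal b hbv hbw⟩, by simpa using hb⟩
    omega
  obtain ⟨c, hc⟩ := (finrank_eq_one_iff_of_nonzero' (⟨b, mem_orthogonal b hbv hbw⟩ : Kᗮ)
    (by simpa using hb)).mp hKperp ⟨a, mem_orthogonal a hav haw⟩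
  exact ⟨c, congrArg Subtype.val hc⟩

theorem inner_eq_zero_of_finrank_le_three (hE : finrank 𝕜 E ≤ 3) {u₀ u₁ u₂ v w₁ w₂ : E}
    (hv : v ≠ 0) (hu₁ : u₁ ≠ 0) (hu₀v : ⟪u₀, v⟫_𝕜 = 0) (hu₁v : ⟪u₁, v⟫_𝕜 = 0)
    (hu₂v : ⟪u₂, v⟫_𝕜 = 0) (hu₀w₁ : ⟪u₀, w₁⟫_𝕜 = 0) (hu₁w₁ : ⟪u₁, w₁⟫_𝕜 = 0)
    (hu₂w₁ : ⟪u₂, w₁⟫_𝕜 ≠ 0) (hu₁w₂ : ⟪u₁, w₂⟫_𝕜 = 0) : ⟪u₀, w₂⟫_𝕜 = 0 := by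
  have hvw₁ : LinearIndependent 𝕜 ![v, w₁] := by
    refine LinearIndependent.pair_iff.mpr fun s t hst => ?_
    have ht : t = 0 := by
      simpa [inner_add_right, inner_smul_right, hu₂v, hu₂w₁] using congrArg (⟪u₂, ·⟫_𝕜) hst
    subst ht
    simpa [hv] using hst
  obtain ⟨c, rfl⟩ :=
    exists_smul_eq_of_inner_eq_zero_of_finrank_le_three hE hvw₁ hu₀v hu₀w₁ hu₁v hu₁w₁ hu₁
  rw [inner_smul_left, hu₁w₂, mul_zero]

end FinrankLeThree

open Matrix

theorem isPsdFactorization_vecMulVec {p q k : ℕ} {M : Matrix (Fin p) (Fin q) ℝ}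
    (a : Fin p → Fin k → ℝ) (b : Fin q → Fin k → ℝ) (h : ∀ i j, M i j = (a i ⬝ᵥ b j) ^ 2) :
    IsPsdFactorization M (fun i => vecMulVec (a i) (a i)) (fun j => vecMulVec (b j) (b j)) :=
  ⟨fun i => by simpa using posSemidef_vecMulVec_self_star (a i),
    fun j => by simpa using posSemidef_vecMulVec_self_star (b j),
    fun i j => by
      rw [h, vecMulVec_mul_vecMulVec, trace_vecMulVec, dotProduct_smul, smul_eq_mul, sq]⟩

theorem psdRank_eq_of_forall_lt {p q k : ℕ} {M : Matrix (Fin p) (Fin q) ℝ} (hk : 0 < k)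
    (hM : ∃ A B, IsPsdFactorization (k := k) M A B)
    (hlt : ∀ m < k, ∀ A B, ¬ IsPsdFactorization (k := m) M A B) : psdRank M = k :=
  le_antisymm (Nat.sInf_le ⟨hk, hM⟩) <| le_csInf ⟨k, hk, hM⟩ fun m ⟨_, A, B, h⟩ =>
    not_lt.mp fun hm => hlt m hm A B h

def psdRankExample : Matrix (Fin 8) (Fin 6) ℝ :=
  !![0, 0, 2, 1, 0, 1;
     1, 0, 0, 2, 0, 1;
     0, 1, 2, 0, 0, 1;
     1, 2, 0, 0, 0, 1;
     0, 0, 2, 1, 1, 0;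
     1, 0, 0, 2, 1, 0;
     0, 1, 2, 0, 1, 0;
     1, 2, 0, 0, 1, 0]

theorem exists_isPsdFactorization_psdRankExample :
    ∃ (A : Fin 8 → Matrix (Fin 4) (Fin 4) ℝ) (B : Fin 6 → Matrix (Fin 4) (Fin 4) ℝ),
      IsPsdFactorization psdRankExample A B := by
  let a : Fin 8 → Fin 4 → ℝ :=
    ![![1, 0, 0, 0], ![0, 1, 0, 0], ![0, 0, 1, 0], ![-√2, 1, √2, 0],
      ![1, 0, 0, 1], ![0, 1, 0, 1], ![0, 0, 1, 1], ![-√2, 1, √2, 1]]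
  let b : Fin 6 → Fin 4 → ℝ :=
    ![![0, 1, 0, 0], ![0, 0, 1, 0], ![√2, 0, √2, 0], ![1, √2, 0, 0],
      ![0, 0, 0, 1], ![1, 1, 1, -1]]
  refine ⟨_, _, isPsdFactorization_vecMulVec a b fun i j => ?_⟩
  fin_cases i <;> fin_cases j <;>
    norm_num [psdRankExample, a, b, dotProduct, Fin.sum_univ_four, cons_val_two, cons_val_three]

theorem not_isPsdFactorization_psdRankExample {k : ℕ} (hk : k ≤ 3)
    (A : Fin 8 → Matrix (Fin k) (Fin k) ℝ) (B : Fin 6 → Matrix (Fin k) (Fin k) ℝ) :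
    ¬ IsPsdFactorization psdRankExample A B := by
  rintro ⟨hA, hB, hM⟩
  let V i := LinearMap.range (toEuclideanLin (A i))
  let W j := LinearMap.range (toEuclideanLin (B j))
  have ortho : ∀ i j, psdRankExample i j = 0 → ∀ u ∈ V i, ∀ w ∈ W j, ⟪u, w⟫_ℝ = 0 :=
    fun i j h => isOrtho_iff_inner_eq.mp <|
      ((hA i).trace_mul_eq_zero_iff_isOrtho (hB j)).mp (hM i j ▸ h)
  have not_ortho : ∀ i j, psdRankExample i j ≠ 0 → ∃ u ∈ V i, ∃ w ∈ W j, ⟪u, w⟫_ℝ ≠ 0 :=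
    fun i j h => by
      have := mt ((hA i).trace_mul_eq_zero_iff_isOrtho (hB j)).mpr (hM i j ▸ h)
      simpa only [isOrtho_iff_inner_eq, not_forall, exists_prop] using this
  obtain ⟨_, _, v, hv, hv0⟩ := not_ortho 4 4 (by simp [psdRankExample])
  obtain ⟨u₀, hu₀, w₂, hw₂, hu₀w₂⟩ := not_ortho 0 2 (by simp [psdRankExample])
  obtain ⟨u₁, hu₁, _, _, hu₁0⟩ := not_ortho 1 0 (by simp [psdRankExample])
  obtain ⟨u₂, hu₂, w₁, hw₁, hu₂w₁⟩ := not_ortho 2 1 (by simp [psdRankExample])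
  refine hu₀w₂ <| inner_eq_zero_of_finrank_le_three (by simpa using hk)
    (fun h => hv0 (by simp [h])) (fun h => hu₁0 (by simp [h]))
    (ortho 0 4 (by simp [psdRankExample]) u₀ hu₀ v hv)
    (ortho 1 4 (by simp [psdRankExample]) u₁ hu₁ v hv)
    (ortho 2 4 (by simp [psdRankExample]) u₂ hu₂ v hv)
    (ortho 0 1 (by simp [psdRankExample]) u₀ hu₀ w₁ hw₁)
    (ortho 1 1 (by simp [psdRankExample]) u₁ hu₁ w₁ hw₁) hu₂w₁
    (ortho 1 2 (by simp [psdRankExample]) u₁ hu₁ w₂ hw₂)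

/-- The explicit `8 × 6` matrix `M` admits a psd factorization of size
four and admits no psd factorization of size three; that is, `psdRank M = 4`. -/
theorem psdRank_M_eq_four :
    let M : Matrix (Fin 8) (Fin 6) ℝ :=
      !![0, 0, 2, 1, 0, 1;
         1, 0, 0, 2, 0, 1;
         0, 1, 2, 0, 0, 1;
         1, 2, 0, 0, 0, 1;
         0, 0, 2, 1, 1, 0;
         1, 0, 0, 2, 1, 0;
         0, 1, 2, 0, 1, 0;
         1, 2, 0, 0, 1, 0]
    (∃ (A : Fin 8 → Matrix (Fin 4) (Fin 4) ℝ) (B : Fin 6 → Matrix (Fin 4) (Fin 4) ℝ),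
        IsPsdFactorization M A B) ∧
    (¬ ∃ (A : Fin 8 → Matrix (Fin 3) (Fin 3) ℝ) (B : Fin 6 → Matrix (Fin 3) (Fin 3) ℝ),
        IsPsdFactorization M A B) ∧
    psdRank M = 4 :=
  ⟨exists_isPsdFactorization_psdRankExample,
    fun ⟨A, B, h⟩ => not_isPsdFactorization_psdRankExample le_rfl A B h,
    psdRank_eq_of_forall_lt four_pos exists_isPsdFactorization_psdRankExample
      fun _ hm => not_isPsdFactorization_psdRankExample (Nat.le_of_lt_succ hm)⟩
end
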